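/- Let b ∈ ℝ³, b ≠ 0, and α > 0. A point μ ∈ ℝ³ with ‖μ‖ = 1 satisfies −μ × b − α μ × (μ × b) = 0 if and only if μ = b/‖b‖ or μ = −b/‖b‖. -/

import Mathlib

/-! Dotting the equation with `c = μ × b` kills the damping term, because `c ⟂ μ × c`, and leaves
`‖c‖² = 0`; so the equilibria are exactly the `μ` with `μ × b = 0`. For a unit vector `μ` the
expansion `μ × (μ × b) = ⟪μ, b⟫ μ - b` then gives `b = ⟪μ, b⟫ μ`, i.e. `μ = ±b / ‖b‖`. -/

open RealInnerProductSpace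

noncomputable def cross3 (u v : EuclideanSpace ℝ (Fin 3)) : EuclideanSpace ℝ (Fin 3) :=
  WithLp.toLp 2 ![u 1 * v 2 - u 2 * v 1, u 2 * v 0 - u 0 * v 2, u 0 * v 1 - u 1 * v 0]

lemma eq_inv_norm_smul_or_eq_neg_of_eq_smul {E : Type*} [NormedAddCommGroup E]
    [NormedSpace ℝ E] {u v : E} {t : ℝ} (hu : ‖u‖ = 1) (hv : v ≠ 0) (h : v = t • u) :
    u = ‖v‖⁻¹ • v ∨ u = -(‖v‖⁻¹ • v) := by
  have ht : t ≠ 0 := by rintro rfl; simp_all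
  rw [h, norm_smul, hu, mul_one, Real.norm_eq_abs, smul_smul, ← neg_smul]
  rcases ht.lt_or_gt with ht | ht
  · right; rw [abs_of_neg ht, inv_neg, neg_mul, neg_neg, inv_mul_cancel₀ ht.ne, one_smul]
  · left; rw [abs_of_pos ht, inv_mul_cancel₀ ht.ne', one_smul]

section CrossProduct

open Matrix WithLp

lemma real_inner_eq_dotProduct {ι : Type*} [Fintype ι] (x y : EuclideanSpace ℝ ι) :
    ⟪x, y⟫ = ofLp x ⬝ᵥ ofLp y :=
  dotProduct_comm _ _

lemma cross3_eq_toLp_crossProduct (u v : EuclideanSpace ℝ (Fin 3)) :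
    cross3 u v = toLp 2 (ofLp u ⨯₃ ofLp v) := by
  rw [cross_apply]
  rfl

lemma cross3_zero_right (u : EuclideanSpace ℝ (Fin 3)) : cross3 u 0 = 0 := by
  rw [cross3_eq_toLp_crossProduct, ofLp_zero, map_zero]
  rfl

lemma cross3_smul_self_left (c : ℝ) (v : EuclideanSpace ℝ (Fin 3)) : cross3 (c • v) v = 0 := by
  rw [cross3_eq_toLp_crossProduct, ofLp_smul, LinearMap.map_smul₂, cross_self, smul_zero]
  rfl

lemma inner_cross3_self_right (u v : EuclideanSpace ℝ (Fin 3)) : ⟪v, cross3 u v⟫ = 0 := by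
  rw [real_inner_eq_dotProduct, cross3_eq_toLp_crossProduct, ofLp_toLp, dot_cross_self]

lemma cross3_cross3 (u v w : EuclideanSpace ℝ (Fin 3)) :
    cross3 u (cross3 v w) = ⟪u, w⟫ • v - ⟪u, v⟫ • w := by
  simp only [cross3_eq_toLp_crossProduct, cross_cross_eq_smul_sub_smul',
    real_inner_eq_dotProduct, dotProduct_comm (ofLp v)]
  rfl

end CrossProduct

lemma neg_cross3_sub_smul_cross3_cross3_eq_zero_iff (α : ℝ) (u v : EuclideanSpace ℝ (Fin 3)) :
    -(cross3 u v) - α • cross3 u (cross3 u v) = 0 ↔ cross3 u v = 0 := by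
  refine ⟨fun h => ?_, fun h => by rw [h, cross3_zero_right, smul_zero, neg_zero, sub_zero]⟩
  simpa [inner_sub_right, inner_smul_right, inner_cross3_self_right] using
    congrArg (⟪cross3 u v, ·⟫) h

lemma eq_inner_smul_of_cross3_eq_zero {u v : EuclideanSpace ℝ (Fin 3)} (hu : ‖u‖ = 1)
    (h : cross3 u v = 0) : v = ⟪u, v⟫ • u := by
  have expand := cross3_cross3 u u v
  rw [h, cross3_zero_right, real_inner_self_eq_norm_sq, hu, one_pow, one_smul] at expand
  exact (sub_eq_zero.mp expand.symm).symm

lemma cross3_eq_zero_iff_of_norm_eq_one {u v : EuclideanSpace ℝ (Fin 3)} (hu : ‖u‖ = 1)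
    (hv : v ≠ 0) : cross3 u v = 0 ↔ u = ‖v‖⁻¹ • v ∨ u = -(‖v‖⁻¹ • v) := by
  refine ⟨fun h => eq_inv_norm_smul_or_eq_neg_of_eq_smul hu hv
    (eq_inner_smul_of_cross3_eq_zero hu h), ?_⟩
  rintro (rfl | rfl)
  · exact cross3_smul_self_left _ v
  · rw [← neg_smul]
    exact cross3_smul_self_left _ v

theorem landau_lifshitz_equilibria_general (α : ℝ)
    (b : EuclideanSpace ℝ (Fin 3)) (hb : b ≠ 0) :
    ∀ μ : EuclideanSpace ℝ (Fin 3), ‖μ‖ = 1 →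
      (-(cross3 μ b) - α • cross3 μ (cross3 μ b) = 0 ↔
        μ = ‖b‖⁻¹ • b ∨ μ = -(‖b‖⁻¹ • b)) := by
  intro μ hμ
  rw [neg_cross3_sub_smul_cross3_cross3_eq_zero_iff, cross3_eq_zero_iff_of_norm_eq_one hμ hb]

theorem landau_lifshitz_equilibria (α : ℝ) (hα : 0 < α)
    (b : EuclideanSpace ℝ (Fin 3)) (hb : b ≠ 0) :
    ∀ μ : EuclideanSpace ℝ (Fin 3), ‖μ‖ = 1 →
      (-(cross3 μ b) - α • cross3 μ (cross3 μ b) = 0 ↔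
        μ = ‖b‖⁻¹ • b ∨ μ = -(‖b‖⁻¹ • b)) :=
  landau_lifshitz_equilibria_general α b hb
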